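/- Let R be a Noetherian local ring. Assume (PS): for all nonzero finitely generated R-modules M and N with pd_R N < ∞ and M ⊗_R N of finite length, one has dim M ≤ grade N. Then (DI) holds: for all nonzero finitely generated R-modules M and N with pd_R N < ∞ and M ⊗_R N of finite length, one has dim M + dim N ≤ dim R. -/

import Mathlib

/-!
By (PS), `dim M ≤ grade N`, so it suffices that `grade N + dim N ≤ dim R`. If `x₁, …, x_g`
is an `R`-regular sequence in `ann N`, then `R ⧸ ann N` is a quotient of `R ⧸ (x₁, …, x_g)`,
and over a Noetherian local ring the latter has dimension exactly `dim R - g`.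
-/

open CategoryTheory CategoryTheory.Limits

open scoped TensorProduct

universe u

/-- The Krull dimension of a commutative ring, valued in `WithBot ℕ∞`. -/
noncomputable def ringDim (R : Type u) [CommRing R] : WithBot ℕ∞ := ringKrullDim R

/-- The Krull dimension of a module `M`: the Krull dimension of `R ⧸ ann M`. -/
noncomputable def moduleDim (R : Type u) [CommRing R] (M : Type u) [AddCommGroup M]
    [Module R M] : WithBot ℕ∞ :=
  ringDim (R ⧸ Module.annihilator R M)

/-- The grade of a module `M`: the length of a maximal `R`-regular sequence contained in
`ann M`, i.e. the supremum of lengths of `R`-regular sequences of elements of `ann M`. -/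
noncomputable def moduleGrade (R : Type u) [CommRing R] (M : Type u) [AddCommGroup M]
    [Module R M] : ℕ∞ :=
  sSup {n : ℕ∞ | ∃ rs : List R, n = (rs.length : ℕ∞) ∧
    (∀ x ∈ rs, x ∈ Module.annihilator R M) ∧ RingTheory.Sequence.IsRegular R rs}

/-- A module has finite projective dimension iff for some `n` the functors `Ext^i(M, -)`
vanish for all `i > n`. -/
def HasFinitePD (R : Type u) [CommRing R] (M : Type u) [AddCommGroup M] [Module R M] : Prop :=
  ∃ n : ℕ, ∀ i : ℕ, n < i → ∀ L : ModuleCat.{u} R,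
    IsZero (((Ext R (ModuleCat.{u} R) i).obj (Opposite.op (ModuleCat.of R M))).obj L)

open RingTheory.Sequence

lemma length_add_moduleDim_le_of_isRegular {R : Type u} [CommRing R] [IsLocalRing R]
    [IsNoetherianRing R] (N : Type u) [AddCommGroup N] [Module R N] {rs : List R}
    (hrs : IsRegular R rs) (hann : ∀ x ∈ rs, x ∈ Module.annihilator R N) :
    (rs.length : WithBot ℕ∞) + moduleDim R N ≤ ringDim R := by
  have hle : Ideal.ofList rs ≤ Module.annihilator R N := Ideal.span_le.mpr hann
  have hdim : moduleDim R N ≤ ringKrullDim (R ⧸ Ideal.ofList rs) :=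
    ringKrullDim_le_of_surjective _ (Ideal.Quotient.factor_surjective hle)
  calc (rs.length : WithBot ℕ∞) + moduleDim R N
      ≤ ringKrullDim (R ⧸ Ideal.ofList rs) + rs.length := by rw [add_comm]; gcongr
    _ = ringDim R := ringKrullDim_add_length_eq_ringKrullDim_of_isRegular rs hrs

lemma ENat.coe_sSup_add_le {s : Set ℕ∞} (hs : s.Nonempty) {a b : WithBot ℕ∞}
    (h : ∀ n ∈ s, (n : WithBot ℕ∞) + a ≤ b) : ((sSup s : ℕ∞) : WithBot ℕ∞) + a ≤ b := by
  induction a using WithBot.recBotCoe with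
  | bot => simp
  | coe e =>
    induction b using WithBot.recBotCoe with
    | bot =>
      obtain ⟨n, hn⟩ := hs
      simpa [← WithBot.coe_add] using h n hn
    | coe d =>
      rw [← WithBot.coe_add, WithBot.coe_le_coe, ENat.sSup_add hs]
      exact iSup₂_le fun n hn => WithBot.coe_le_coe.mp (h n hn)

theorem moduleGrade_add_moduleDim_le (R : Type u) [CommRing R] [IsLocalRing R]
    [IsNoetherianRing R] (N : Type u) [AddCommGroup N] [Module R N] :
    (moduleGrade R N : WithBot ℕ∞) + moduleDim R N ≤ ringDim R := by
  refine ENat.coe_sSup_add_le ?_ ?_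
  · exact ⟨0, [], rfl, by simp, .nil R R⟩
  · rintro _ ⟨rs, rfl, hann, hrs⟩
    exact_mod_cast length_add_moduleDim_le_of_isRegular N hrs hann

theorem stmt_9 (R : Type u) [CommRing R] [IsLocalRing R] [IsNoetherianRing R]
    (hPS : ∀ (M N : Type u) [AddCommGroup M] [Module R M] [AddCommGroup N] [Module R N]
      [Module.Finite R M] [Module.Finite R N] [Nontrivial M] [Nontrivial N],
      HasFinitePD R N → IsFiniteLength R (M ⊗[R] N) →
      moduleDim R M ≤ (moduleGrade R N : WithBot ℕ∞)) :
    ∀ (M N : Type u) [AddCommGroup M] [Module R M] [AddCommGroup N] [Module R N]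
      [Module.Finite R M] [Module.Finite R N] [Nontrivial M] [Nontrivial N],
      HasFinitePD R N → IsFiniteLength R (M ⊗[R] N) →
      moduleDim R M + moduleDim R N ≤ ringDim R := by
  intro M N _ _ _ _ _ _ _ _ hPD hFL
  calc moduleDim R M + moduleDim R N
      ≤ (moduleGrade R N : WithBot ℕ∞) + moduleDim R N := by gcongr; exact hPS M N hPD hFL
    _ ≤ ringDim R := moduleGrade_add_moduleDim_le R N
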